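/- arXiv:2410.07931 — 2 statements merged into one kernel-verified Lean document; each statement's English description precedes it below -/
import Mathlib

section
/- Let (G,ψ) be a Γ-gain graph and let H₁, H₂ be connected subgraphs of G such that H₁ ∩ H₂ is connected and has no fixed cut-vertex; set H = H₁ ∪ H₂. If H₁ is balanced, then ⟨H⟩ = ⟨H₂⟩; in particular, if H₂ is also balanced then H is balanced. -/
open scoped Classical

namespace GR

/-- A finite directed multigraph with edge labels ("gains") in a group `Γ` and a
designated finite set of fixed vertices. -/
structure GainedGraph (V E Γ : Type) where
  tail : E → V
  head : E → V
  gain : E → Γ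
  fixed : Finset V

variable {V E Γ : Type} [DecidableEq V] [DecidableEq E] [Fintype V] [Fintype E] [Group Γ]

/-- A subgraph: a set of vertices and a set of edges whose endpoints lie in the vertex set. -/
structure Subgraph (G : GainedGraph V E Γ) where
  verts : Finset V
  edges : Finset E
  tail_mem : ∀ e ∈ edges, G.tail e ∈ verts
  head_mem : ∀ e ∈ edges, G.head e ∈ verts

namespace Subgraph

variable {G : GainedGraph V E Γ}

instance : Top (Subgraph G) :=
  ⟨⟨Finset.univ, Finset.univ, fun _ _ => Finset.mem_univ _, fun _ _ => Finset.mem_univ _⟩⟩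

instance : LE (Subgraph G) :=
  ⟨fun H K => H.verts ⊆ K.verts ∧ H.edges ⊆ K.edges⟩

def union (H K : Subgraph G) : Subgraph G where
  verts := H.verts ∪ K.verts
  edges := H.edges ∪ K.edges
  tail_mem e he := by
    rcases Finset.mem_union.1 he with h | h
    · exact Finset.mem_union_left _ (H.tail_mem e h)
    · exact Finset.mem_union_right _ (K.tail_mem e h)
  head_mem e he := by
    rcases Finset.mem_union.1 he with h | h
    · exact Finset.mem_union_left _ (H.head_mem e h)
    · exact Finset.mem_union_right _ (K.head_mem e h)

def inter (H K : Subgraph G) : Subgraph G where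
  verts := H.verts ∩ K.verts
  edges := H.edges ∩ K.edges
  tail_mem e he := by
    rcases Finset.mem_inter.1 he with ⟨h1, h2⟩
    exact Finset.mem_inter.2 ⟨H.tail_mem e h1, K.tail_mem e h2⟩
  head_mem e he := by
    rcases Finset.mem_inter.1 he with ⟨h1, h2⟩
    exact Finset.mem_inter.2 ⟨H.head_mem e h1, K.head_mem e h2⟩

/-- Delete a vertex together with all edges incident to it. -/
def deleteVertex (H : Subgraph G) (v : V) : Subgraph G where
  verts := H.verts.erase v
  edges := H.edges.filter fun e => G.tail e ≠ v ∧ G.head e ≠ v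
  tail_mem e he := by
    rcases Finset.mem_filter.1 he with ⟨h1, h2, h3⟩
    exact Finset.mem_erase.2 ⟨h2, H.tail_mem e h1⟩
  head_mem e he := by
    rcases Finset.mem_filter.1 he with ⟨h1, h2, h3⟩
    exact Finset.mem_erase.2 ⟨h3, H.head_mem e h1⟩

/-- Delete an edge. -/
def deleteEdge (H : Subgraph G) (f : E) : Subgraph G where
  verts := H.verts
  edges := H.edges.erase f
  tail_mem e he := H.tail_mem e (Finset.mem_of_mem_erase he)
  head_mem e he := H.head_mem e (Finset.mem_of_mem_erase he)

/-- Add an edge (together with its endpoints). -/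
def addEdge (H : Subgraph G) (f : E) : Subgraph G where
  verts := insert (G.tail f) (insert (G.head f) H.verts)
  edges := insert f H.edges
  tail_mem e he := by
    rcases Finset.mem_insert.1 he with rfl | h
    · exact Finset.mem_insert_self _ _
    · exact Finset.mem_insert_of_mem (Finset.mem_insert_of_mem (H.tail_mem e h))
  head_mem e he := by
    rcases Finset.mem_insert.1 he with rfl | h
    · exact Finset.mem_insert_of_mem (Finset.mem_insert_self _ _)
    · exact Finset.mem_insert_of_mem (Finset.mem_insert_of_mem (H.head_mem e h))

/-- The free vertices of a subgraph. -/
def freeVerts (H : Subgraph G) : Finset V := H.verts \ G.fixed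

/-- The fixed vertices of a subgraph. -/
def fixedVerts (H : Subgraph G) : Finset V := H.verts ∩ G.fixed

end Subgraph

/-- The starting vertex of an oriented traversal of an edge. -/
def stepStart (G : GainedGraph V E Γ) (s : E × Bool) : V :=
  if s.2 then G.tail s.1 else G.head s.1

/-- The ending vertex of an oriented traversal of an edge. -/
def stepEnd (G : GainedGraph V E Γ) (s : E × Bool) : V :=
  if s.2 then G.head s.1 else G.tail s.1

/-- The gain contributed by an oriented traversal of an edge. -/
def stepGain (G : GainedGraph V E Γ) (s : E × Bool) : Γ :=
  if s.2 then G.gain s.1 else (G.gain s.1)⁻¹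

/-- `IsWalk G H L u w` : `L` is a walk in the subgraph `H` from `u` to `w`. -/
def IsWalk (G : GainedGraph V E Γ) (H : Subgraph G) : List (E × Bool) → V → V → Prop
  | [], u, w => u = w ∧ u ∈ H.verts
  | s :: L, u, w => s.1 ∈ H.edges ∧ stepStart G s = u ∧ IsWalk G H L (stepEnd G s) w

/-- The gain of a walk. -/
def walkGain (G : GainedGraph V E Γ) (L : List (E × Bool)) : Γ :=
  (L.map (stepGain G)).prod

/-- The vertices visited by a walk starting at `u`. -/
def walkVerts (G : GainedGraph V E Γ) (u : V) (L : List (E × Bool)) : List V :=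
  u :: L.map (stepEnd G)

/-- `⟨H⟩` : the subgroup of `Γ` generated by the gains of all closed walks in `H`
containing no fixed vertex. -/
def gainGroup (G : GainedGraph V E Γ) (H : Subgraph G) : Subgroup Γ :=
  Subgroup.closure
    {g | ∃ u L, IsWalk G H L u u ∧ (∀ x ∈ walkVerts G u L, x ∉ G.fixed) ∧ walkGain G L = g}

/-- A subgraph is balanced if its gain group is trivial. -/
def Balanced (G : GainedGraph V E Γ) (H : Subgraph G) : Prop := gainGroup G H = ⊥

def Reachable (G : GainedGraph V E Γ) (H : Subgraph G) (u w : V) : Prop :=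
  ∃ L, IsWalk G H L u w

def Connected (G : GainedGraph V E Γ) (H : Subgraph G) : Prop :=
  H.verts.Nonempty ∧ ∀ u ∈ H.verts, ∀ w ∈ H.verts, Reachable G H u w

/-- `v` is a cut-vertex of the subgraph `H`. -/
def IsCutVertex (G : GainedGraph V E Γ) (H : Subgraph G) (v : V) : Prop :=
  v ∈ H.verts ∧ ∃ u ∈ H.verts, ∃ w ∈ H.verts, u ≠ v ∧ w ≠ v ∧
    Reachable G H u w ∧ ¬ Reachable G (H.deleteVertex v) u w

/-- `(2,m,l)`-sparsity of the subgraph `K`. -/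
def Sparse (G : GainedGraph V E Γ) (m l : ℤ) (K : Subgraph G) : Prop :=
  ∀ H : Subgraph G, H ≤ K → H.edges.Nonempty →
    (H.edges.card : ℤ) ≤ 2 * (H.freeVerts.card : ℤ) + m * (H.fixedVerts.card : ℤ) - l

/-- `(2,m,l)`-tightness of the subgraph `K`. -/
def Tight (G : GainedGraph V E Γ) (m l : ℤ) (K : Subgraph G) : Prop :=
  Sparse G m l K ∧
    (K.edges.card : ℤ) = 2 * (K.freeVerts.card : ℤ) + m * (K.fixedVerts.card : ℤ) - l

/-- `(2,m,3,l)`-gain-tightness: `(2,m,l)`-tight and every balanced subgraph with a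
nonempty edge set is `(2,3)`-sparse. -/
def GainTight23 (G : GainedGraph V E Γ) (m l : ℤ) (K : Subgraph G) : Prop :=
  Tight G m l K ∧ ∀ H : Subgraph G, H ≤ K → H.edges.Nonempty → Balanced G H →
    (H.edges.card : ℤ) ≤ 2 * (H.verts.card : ℤ) - 3

/-- The subgraph has no fixed vertex. -/
def NoFixed (G : GainedGraph V E Γ) (H : Subgraph G) : Prop :=
  ∀ x ∈ H.verts, x ∉ G.fixed

/-- Near-balanced with base vertex `v` and gain `δ`: unbalanced, and every closed
walk starting at `v` not containing `v` as an internal vertex has gain `1`, `δ` or `δ⁻¹`. -/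
def NearBalancedAt (G : GainedGraph V E Γ) (H : Subgraph G) (v : V) (δ : Γ) : Prop :=
  ¬ Balanced G H ∧ ∀ L, IsWalk G H L v v →
    (∀ x ∈ (L.map (stepEnd G)).dropLast, x ≠ v) → walkGain G L ∈ ({1, δ, δ⁻¹} : Set Γ)

def NearBalanced (G : GainedGraph V E Γ) (H : Subgraph G) : Prop :=
  NoFixed G H ∧ ∃ v ∈ H.verts, ∃ δ : Γ, NearBalancedAt G H v δ

/-- The gain group of `H` is isomorphic to `ℤ_n`. -/
def IsZIso (G : GainedGraph V E Γ) (H : Subgraph G) (n : ℕ) : Prop :=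
  Nonempty (gainGroup G H ≃* Multiplicative (ZMod n))

def ProperNearBalanced (G : GainedGraph V E Γ) (H : Subgraph G) : Prop :=
  NearBalanced G H ∧ ¬ IsZIso G H 2 ∧ ¬ IsZIso G H 3

/-- The set `S_i(k,j)`. -/
def SSet (k j : ℕ) (i : ℤ) : Set ℕ :=
  {n | 2 ≤ n ∧ n ∣ k ∧ (Odd j → n ≠ 2) ∧ ((j : ZMod n) = (i : ZMod n))}

/-- `H` is `S_i(k,j)`. -/
def IsS (G : GainedGraph V E Γ) (k j : ℕ) (i : ℤ) (H : Subgraph G) : Prop :=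
  ∃ n ∈ SSet k j i, IsZIso G H n

/-- `H` is `S_{±1}(k,j)`. -/
def IsSpm (G : GainedGraph V E Γ) (k j : ℕ) (H : Subgraph G) : Prop :=
  IsS G k j (-1) H ∨ IsS G k j 1 H

/-- The function `α_k^j` on (connected) subgraphs. -/
noncomputable def alpha (G : GainedGraph V E Γ) (k j : ℕ) (X : Subgraph G) : ℤ :=
  if Balanced G X then 0
  else if Odd j ∧ IsZIso G X 2 then 1
  else if IsSpm G k j X then 2 - (X.fixedVerts.card : ℤ)
  else if IsS G k j 0 X ∨ (X.fixedVerts.card = 0 ∧ ProperNearBalanced G X) then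
    2 - 2 * (X.fixedVerts.card : ℤ)
  else 3 - 2 * (X.fixedVerts.card : ℤ)

/-- The subgraph spanned by a set of edges. -/
def edgeSpan (G : GainedGraph V E Γ) (F : Finset E) : Subgraph G where
  verts := F.image G.tail ∪ F.image G.head
  edges := F
  tail_mem e he := Finset.mem_union_left _ (Finset.mem_image_of_mem _ he)
  head_mem e he := Finset.mem_union_right _ (Finset.mem_image_of_mem _ he)

/-- The connected component of the edge `e` in the subgraph spanned by `F`. -/
noncomputable def componentOf (G : GainedGraph V E Γ) (F : Finset E) (e : E) : Subgraph G :=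
  edgeSpan G (F.filter fun f => Reachable G (edgeSpan G F) (G.tail e) (G.tail f))

/-- The connected components of the edge set `F`. -/
noncomputable def components (G : GainedGraph V E Γ) (F : Finset E) : Finset (Subgraph G) :=
  F.image (componentOf G F)

/-- The count `f_k^j(F) = Σ_{X ∈ C(F)} (2|V(X)| − 3 + α_k^j(X))`. -/
noncomputable def fCount (G : GainedGraph V E Γ) (k j : ℕ) (F : Finset E) : ℤ :=
  ∑ X ∈ components G F, (2 * (X.verts.card : ℤ) - 3 + alpha G k j X)

/-- `ℤ_k^j`-gain sparsity. -/
def GainSparseKJ (G : GainedGraph V E Γ) (k j : ℕ) (K : Subgraph G) : Prop :=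
  ∀ H : Subgraph G, H ≤ K → H.edges.Nonempty → (H.edges.card : ℤ) ≤ fCount G k j H.edges

/-- `ℤ_k^j`-gain tightness. -/
def GainTightKJ (G : GainedGraph V E Γ) (k j : ℕ) (K : Subgraph G) : Prop :=
  GainSparseKJ G k j K ∧ (K.edges.card : ℤ) = fCount G k j K.edges

/-- The degree of a vertex in a subgraph (a loop counts twice). -/
def degree (G : GainedGraph V E Γ) (K : Subgraph G) (v : V) : ℕ :=
  (K.edges.filter fun e => G.tail e = v).card + (K.edges.filter fun e => G.head e = v).card

def HasLoopAt (G : GainedGraph V E Γ) (K : Subgraph G) (v : V) : Prop :=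
  ∃ e ∈ K.edges, G.tail e = v ∧ G.head e = v

/-- The neighbours of a vertex in a subgraph. -/
def neighbors (G : GainedGraph V E Γ) (K : Subgraph G) (v : V) : Finset V :=
  ((K.edges.filter fun e => G.tail e = v).image G.head) ∪
    ((K.edges.filter fun e => G.head e = v).image G.tail)

/-- The subgraph `K` satisfies the axioms of a `Γ`-gain graph. -/
structure IsGainGraphOn (G : GainedGraph V E Γ) (K : Subgraph G) : Prop where
  fixed_card : K.fixedVerts.card ≤ 1
  same_dir : ∀ e ∈ K.edges, ∀ f ∈ K.edges, e ≠ f → G.tail e = G.tail f →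
    G.head e = G.head f → G.gain e ≠ G.gain f
  opp_dir : ∀ e ∈ K.edges, ∀ f ∈ K.edges, e ≠ f → G.tail e = G.head f →
    G.head e = G.tail f → G.gain e ≠ (G.gain f)⁻¹
  fixed_not_loop : ∀ e ∈ K.edges, G.tail e = G.head e → G.tail e ∉ G.fixed
  fixed_not_parallel : ∀ e ∈ K.edges, ∀ f ∈ K.edges, e ≠ f →
    (G.tail e ∈ G.fixed ∨ G.head e ∈ G.fixed) →
    ({G.tail e, G.head e} : Finset V) ≠ {G.tail f, G.head f}
  loop_gain : ∀ e ∈ K.edges, G.tail e = G.head e → G.gain e ≠ 1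

/-- `H` together with the vertex `v` and all edges of `G₀` incident to `v`. -/
def addVertexEdges (G : GainedGraph V E Γ) (G₀ H : Subgraph G) (v : V) : Subgraph G where
  verts := (H.verts ∪ {v}) ∪
    ((G₀.edges.filter fun e => G.tail e = v ∨ G.head e = v).image G.tail ∪
      (G₀.edges.filter fun e => G.tail e = v ∨ G.head e = v).image G.head)
  edges := H.edges ∪ G₀.edges.filter fun e => G.tail e = v ∨ G.head e = v
  tail_mem e he := by
    rcases Finset.mem_union.1 he with h | h
    · exact Finset.mem_union_left _ (Finset.mem_union_left _ (H.tail_mem e h))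
    · exact Finset.mem_union_right _ (Finset.mem_union_left _ (Finset.mem_image_of_mem _ h))
  head_mem e he := by
    rcases Finset.mem_union.1 he with h | h
    · exact Finset.mem_union_left _ (Finset.mem_union_left _ (H.head_mem e h))
    · exact Finset.mem_union_right _ (Finset.mem_union_right _ (Finset.mem_image_of_mem _ h))

/-- The result of a 1-reduction at `v` adding the edge `f`: delete `v` and all edges at
`v` and add the edge `f`. -/
def reduceAt (G : GainedGraph V E Γ) (G₀ : Subgraph G) (v : V) (f : E) : Subgraph G where
  verts := insert (G.tail f) (insert (G.head f) (G₀.verts.erase v))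
  edges := insert f (G₀.edges.filter fun e => G.tail e ≠ v ∧ G.head e ≠ v)
  tail_mem e he := by
    rcases Finset.mem_insert.1 he with rfl | h
    · exact Finset.mem_insert_self _ _
    · rcases Finset.mem_filter.1 h with ⟨h1, h2, h3⟩
      exact Finset.mem_insert_of_mem
        (Finset.mem_insert_of_mem (Finset.mem_erase.2 ⟨h2, G₀.tail_mem e h1⟩))
  head_mem e he := by
    rcases Finset.mem_insert.1 he with rfl | h
    · exact Finset.mem_insert_of_mem (Finset.mem_insert_self _ _)
    · rcases Finset.mem_filter.1 h with ⟨h1, h2, h3⟩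
      exact Finset.mem_insert_of_mem
        (Finset.mem_insert_of_mem (Finset.mem_erase.2 ⟨h3, G₀.head_mem e h1⟩))

/-- The new edge `f` arises from a 1-reduction at the vertex `v` of `G₀`: its endpoints are
joined to `v` by two distinct edges of `G₀` and its gain is the gain of the corresponding
path of length two through `v`. -/
def IsOneReduction (G : GainedGraph V E Γ) (G₀ : Subgraph G) (v : V) (f : E) : Prop :=
  f ∉ G₀.edges ∧ G.tail f ≠ v ∧ G.head f ≠ v ∧
    ∃ s₁ s₂ : E × Bool, s₁.1 ∈ G₀.edges ∧ s₂.1 ∈ G₀.edges ∧ s₁.1 ≠ s₂.1 ∧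
      stepEnd G s₁ = v ∧ stepStart G s₂ = v ∧
      G.tail f = stepStart G s₁ ∧ G.head f = stepEnd G s₂ ∧
      G.gain f = stepGain G s₁ * stepGain G s₂

/-- Two labelled edges coincide (up to reorientation with gain inversion). -/
def SameEdge (G : GainedGraph V E Γ) (e f : E) : Prop :=
  (G.tail e = G.tail f ∧ G.head e = G.head f ∧ G.gain e = G.gain f) ∨
    (G.tail e = G.head f ∧ G.head e = G.tail f ∧ G.gain e = (G.gain f)⁻¹)

/-- `H` is a blocker of the 1-reduction at `v` adding the edge `f`. -/
def IsBlocker (G : GainedGraph V E Γ) (k j : ℕ) (G₀ : Subgraph G) (v : V) (f : E)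
    (H : Subgraph G) : Prop :=
  H ≤ G₀ ∧ v ∉ H.verts ∧ G.tail f ∈ H.verts ∧ G.head f ∈ H.verts ∧ H.edges.Nonempty ∧
    Connected G (H.addEdge f) ∧
    (H.edges.card : ℤ) = 2 * (H.verts.card : ℤ) - 3 + alpha G k j (H.addEdge f)

/-- The graph `G` extended by one fresh edge `none` with tail `t`, head `h` and gain `g`. -/
def extendGraph (G : GainedGraph V E Γ) (t h : V) (g : Γ) : GainedGraph V (Option E) Γ where
  tail e := e.elim t G.tail
  head e := e.elim h G.head
  gain e := e.elim g G.gain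
  fixed := G.fixed

/-- The whole original graph `G`, viewed inside the extension. -/
def extendTop (G : GainedGraph V E Γ) (t h : V) (g : Γ) : Subgraph (extendGraph G t h g) where
  verts := Finset.univ
  edges := Finset.univ.image Option.some
  tail_mem _ _ := Finset.mem_univ _
  head_mem _ _ := Finset.mem_univ _

/-- There is an admissible 1-reduction at `v`, i.e. a choice of new edge (with
endpoints and gain coming from a path of length two through `v`) such that the
resulting `Γ`-gain graph is well defined and `ℤ_k^j`-gain tight. -/
def AdmissibleOneReductionExists (G : GainedGraph V E Γ) (k j : ℕ) (v : V) : Prop :=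
  ∃ t h : V, ∃ g : Γ,
    IsOneReduction (extendGraph G t h g) (extendTop G t h g) v none ∧
    IsGainGraphOn (extendGraph G t h g)
      (reduceAt (extendGraph G t h g) (extendTop G t h g) v none) ∧
    GainTightKJ (extendGraph G t h g) k j
      (reduceAt (extendGraph G t h g) (extendTop G t h g) v none)

end GR

/-!
Since `H₁` is balanced, the gain of a walk through free vertices of `H₁` depends only on its
ends. As there is at most one fixed vertex and it is not a cut-vertex of `H₁ ∩ H₂`, any two
free vertices of `H₁ ∩ H₂` are joined by such a walk inside `H₁ ∩ H₂`. Hence every excursion of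
a closed walk of `H₁ ∪ H₂` into `H₁` between two visits of `H₂` can be replaced by a walk of
`H₂` with the same gain. A closed walk that meets `H₂` is first rotated to start there, which
keeps its gain because `Γ` is abelian; one that does not lies in `H₁` and has trivial gain.
-/

namespace GR

variable {V E Γ : Type} {G : GainedGraph V E Γ}

namespace Subgraph

theorem inter_le_left [DecidableEq V] [DecidableEq E] (H K : Subgraph G) : H.inter K ≤ H :=
  ⟨Finset.inter_subset_left, Finset.inter_subset_left⟩

theorem inter_le_right [DecidableEq V] [DecidableEq E] (H K : Subgraph G) : H.inter K ≤ K :=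
  ⟨Finset.inter_subset_right, Finset.inter_subset_right⟩

theorem right_le_union [DecidableEq V] [DecidableEq E] (H K : Subgraph G) : K ≤ H.union K :=
  ⟨Finset.subset_union_right, Finset.subset_union_right⟩

theorem deleteVertex_le [DecidableEq V] (H : Subgraph G) (v : V) : H.deleteVertex v ≤ H :=
  ⟨Finset.erase_subset _ _, Finset.filter_subset _ _⟩

end Subgraph

theorem stepStart_mem {H : Subgraph G} {s : E × Bool} (h : s.1 ∈ H.edges) :
    stepStart G s ∈ H.verts := by
  unfold stepStart; split
  exacts [H.tail_mem _ h, H.head_mem _ h]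

theorem stepEnd_mem {H : Subgraph G} {s : E × Bool} (h : s.1 ∈ H.edges) :
    stepEnd G s ∈ H.verts := by
  unfold stepEnd; split
  exacts [H.head_mem _ h, H.tail_mem _ h]

theorem IsWalk.mem_verts {H : Subgraph G} :
    ∀ {L u w}, IsWalk G H L u w → ∀ x ∈ walkVerts G u L, x ∈ H.verts
  | [], _, _, h, x, hx => by
    simp only [walkVerts, List.map_nil, List.mem_singleton] at hx
    exact hx ▸ h.2
  | s :: L, u, _, h, x, hx => by
    simp only [walkVerts, List.map_cons, List.mem_cons] at hx
    rcases hx with rfl | hx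
    · exact h.2.1 ▸ stepStart_mem h.1
    · exact h.2.2.mem_verts x (by simpa [walkVerts] using hx)

/-- A walk through free vertices only; the closed ones generate `⟨H⟩`. -/
def FreeWalk (G : GainedGraph V E Γ) (H : Subgraph G) (L : List (E × Bool)) (u w : V) : Prop :=
  IsWalk G H L u w ∧ ∀ x ∈ walkVerts G u L, x ∉ G.fixed

@[simp] theorem freeWalk_nil {H : Subgraph G} {u w : V} :
    FreeWalk G H [] u w ↔ u = w ∧ u ∈ H.verts ∧ u ∉ G.fixed := by
  simp [FreeWalk, IsWalk, walkVerts, and_assoc]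

@[simp] theorem freeWalk_cons {H : Subgraph G} {s : E × Bool} {L : List (E × Bool)} {u w : V} :
    FreeWalk G H (s :: L) u w ↔
      s.1 ∈ H.edges ∧ stepStart G s = u ∧ u ∉ G.fixed ∧ FreeWalk G H L (stepEnd G s) w := by
  simp only [FreeWalk, IsWalk, walkVerts, List.map_cons, List.forall_mem_cons]
  tauto

theorem IsWalk.freeWalk {H : Subgraph G} {L : List (E × Bool)} {u w : V} (h : IsWalk G H L u w)
    (hH : NoFixed G H) : FreeWalk G H L u w :=
  ⟨h, fun x hx => hH x (h.mem_verts x hx)⟩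

namespace FreeWalk

variable {H K : Subgraph G}

theorem start_mem : ∀ {L u w}, FreeWalk G H L u w → u ∈ H.verts
  | [], _, _, h => (freeWalk_nil.1 h).2.1
  | _ :: _, _, _, h => (freeWalk_cons.1 h).2.1 ▸ stepStart_mem (freeWalk_cons.1 h).1

theorem start_not_mem_fixed : ∀ {L u w}, FreeWalk G H L u w → u ∉ G.fixed
  | [], _, _, h => (freeWalk_nil.1 h).2.2
  | _ :: _, _, _, h => (freeWalk_cons.1 h).2.2.1

theorem edge_mem : ∀ {L u w}, FreeWalk G H L u w → ∀ t ∈ L, t.1 ∈ H.edges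
  | [], _, _, _, _, ht => absurd ht List.not_mem_nil
  | _ :: _, _, _, h, t, ht => by
    obtain ⟨he, -, -, h⟩ := freeWalk_cons.1 h
    rcases List.mem_cons.1 ht with rfl | ht
    exacts [he, h.edge_mem t ht]

theorem mono (hHK : H ≤ K) : ∀ {L u w}, FreeWalk G H L u w → FreeWalk G K L u w
  | [], _, _, h => by
    obtain ⟨rfl, hu, hf⟩ := freeWalk_nil.1 h
    exact freeWalk_nil.2 ⟨rfl, hHK.1 hu, hf⟩
  | _ :: _, _, _, h => by
    obtain ⟨he, hs, hf, h⟩ := freeWalk_cons.1 h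
    exact freeWalk_cons.2 ⟨hHK.2 he, hs, hf, h.mono hHK⟩

theorem of_edges_subset : ∀ {L u w}, FreeWalk G K L u w → u ∈ H.verts →
    (∀ t ∈ L, t.1 ∈ H.edges) → FreeWalk G H L u w
  | [], _, _, h, hu, _ => by
    obtain ⟨rfl, -, hf⟩ := freeWalk_nil.1 h
    exact freeWalk_nil.2 ⟨rfl, hu, hf⟩
  | s :: _, _, _, h, _, hL => by
    obtain ⟨-, hs, hf, h⟩ := freeWalk_cons.1 h
    have hsH := hL s List.mem_cons_self
    exact freeWalk_cons.2 ⟨hsH, hs, hf,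
      h.of_edges_subset (stepEnd_mem hsH) fun t ht => hL t (List.mem_cons_of_mem s ht)⟩

theorem append : ∀ {L₁ L₂ u c w}, FreeWalk G H L₁ u c → FreeWalk G H L₂ c w →
    FreeWalk G H (L₁ ++ L₂) u w
  | [], _, _, _, _, h₁, h₂ => by
    obtain ⟨rfl, -⟩ := freeWalk_nil.1 h₁
    exact h₂
  | _ :: _, _, _, _, _, h₁, h₂ => by
    obtain ⟨he, hs, hf, h₁⟩ := freeWalk_cons.1 h₁
    exact freeWalk_cons.2 ⟨he, hs, hf, h₁.append h₂⟩

theorem exists_of_append : ∀ {L₁ L₂ u w}, FreeWalk G H (L₁ ++ L₂) u w →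
    ∃ c, FreeWalk G H L₁ u c ∧ FreeWalk G H L₂ c w
  | [], _, _, _, h => ⟨_, freeWalk_nil.2 ⟨rfl, h.start_mem, h.start_not_mem_fixed⟩, h⟩
  | _ :: _, _, _, _, h => by
    obtain ⟨he, hs, hf, h⟩ := freeWalk_cons.1 h
    obtain ⟨c, h₁, h₂⟩ := h.exists_of_append
    exact ⟨c, freeWalk_cons.2 ⟨he, hs, hf, h₁⟩, h₂⟩

end FreeWalk

def reverseWalk (L : List (E × Bool)) : List (E × Bool) :=
  (L.map fun s => (s.1, !s.2)).reverse

@[simp] theorem reverseWalk_nil : reverseWalk ([] : List (E × Bool)) = [] := rfl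

@[simp] theorem reverseWalk_cons (s : E × Bool) (L : List (E × Bool)) :
    reverseWalk (s :: L) = reverseWalk L ++ [(s.1, !s.2)] := by
  simp [reverseWalk]

@[simp] theorem stepStart_flip (s : E × Bool) : stepStart G (s.1, !s.2) = stepEnd G s := by
  obtain ⟨e, b⟩ := s; cases b <;> rfl

@[simp] theorem stepEnd_flip (s : E × Bool) : stepEnd G (s.1, !s.2) = stepStart G s := by
  obtain ⟨e, b⟩ := s; cases b <;> rfl

theorem FreeWalk.reverse {H : Subgraph G} :
    ∀ {L u w}, FreeWalk G H L u w → FreeWalk G H (reverseWalk L) w u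
  | [], _, _, h => by
    obtain ⟨rfl, hu, hf⟩ := freeWalk_nil.1 h
    exact freeWalk_nil.2 ⟨rfl, hu, hf⟩
  | s :: _, _, _, h => by
    obtain ⟨he, rfl, hf, h⟩ := freeWalk_cons.1 h
    have hback : FreeWalk G H [(s.1, !s.2)] (stepEnd G s) (stepStart G s) := by
      simp [he, hf, stepStart_mem he, h.start_not_mem_fixed]
    simpa using h.reverse.append hback

def FreelyConnected (G : GainedGraph V E Γ) (H : Subgraph G) : Prop :=
  ∀ a ∈ H.verts, ∀ b ∈ H.verts, a ∉ G.fixed → b ∉ G.fixed → ∃ L, FreeWalk G H L a b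

theorem Connected.freelyConnected [DecidableEq V] {H : Subgraph G} (hfix : G.fixed.card ≤ 1)
    (hc : Connected G H) (hcut : ∀ v ∈ G.fixed, ¬ IsCutVertex G H v) : FreelyConnected G H := by
  intro a ha b hb hfa hfb
  by_cases hv : ∃ v ∈ G.fixed, v ∈ H.verts
  · obtain ⟨v, hvf, hvH⟩ := hv
    have hnoFixed : NoFixed G (H.deleteVertex v) := fun x hx hxf =>
      (Finset.mem_erase.1 hx).1 (Finset.card_le_one.1 hfix x hxf v hvf)
    have hreach : Reachable G (H.deleteVertex v) a b := by
      by_contra hnot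
      exact hcut v hvf ⟨hvH, a, ha, b, hb, ne_of_mem_of_not_mem hvf hfa |>.symm,
        ne_of_mem_of_not_mem hvf hfb |>.symm, hc.2 a ha b hb, hnot⟩
    obtain ⟨L, hL⟩ := hreach
    exact ⟨L, (hL.freeWalk hnoFixed).mono (H.deleteVertex_le v)⟩
  · push Not at hv
    obtain ⟨L, hL⟩ := hc.2 a ha b hb
    exact ⟨L, hL.freeWalk fun x hx hxf => hv x hxf hx⟩

section Group

variable [Group Γ]

@[simp] theorem walkGain_nil : walkGain G [] = 1 := rfl

@[simp] theorem walkGain_cons (s : E × Bool) (L : List (E × Bool)) :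
    walkGain G (s :: L) = stepGain G s * walkGain G L := List.prod_cons

@[simp] theorem walkGain_append (L₁ L₂ : List (E × Bool)) :
    walkGain G (L₁ ++ L₂) = walkGain G L₁ * walkGain G L₂ := by
  simp [walkGain]

@[simp] theorem walkGain_reverseWalk : ∀ L : List (E × Bool),
    walkGain G (reverseWalk L) = (walkGain G L)⁻¹
  | [] => by simp
  | s :: L => by
    obtain ⟨e, b⟩ := s
    cases b <;> simp [walkGain_reverseWalk L, stepGain]

theorem walkGain_mem_gainGroup {H : Subgraph G} {L : List (E × Bool)} {u : V}
    (h : FreeWalk G H L u u) : walkGain G L ∈ gainGroup G H :=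
  Subgroup.subset_closure ⟨u, L, h.1, h.2, rfl⟩

theorem gainGroup_le_iff {H : Subgraph G} {K : Subgroup Γ} :
    gainGroup G H ≤ K ↔ ∀ L u, FreeWalk G H L u u → walkGain G L ∈ K := by
  refine ⟨fun hK L u h => hK (walkGain_mem_gainGroup h), fun hK => ?_⟩
  rw [gainGroup, Subgroup.closure_le]
  rintro _ ⟨u, L, hw, hf, rfl⟩
  exact hK L u ⟨hw, hf⟩

theorem gainGroup_mono {H K : Subgraph G} (hHK : H ≤ K) : gainGroup G H ≤ gainGroup G K :=
  gainGroup_le_iff.2 fun _ _ h => walkGain_mem_gainGroup (h.mono hHK)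

namespace Balanced

variable {H : Subgraph G}

theorem walkGain_eq_one (hbal : Balanced G H) {L : List (E × Bool)} {u : V}
    (h : FreeWalk G H L u u) : walkGain G L = 1 :=
  Subgroup.mem_bot.1 (hbal ▸ walkGain_mem_gainGroup h)

theorem walkGain_eq (hbal : Balanced G H) {L₁ L₂ : List (E × Bool)} {a b : V}
    (h₁ : FreeWalk G H L₁ a b) (h₂ : FreeWalk G H L₂ a b) : walkGain G L₁ = walkGain G L₂ := by
  simpa [mul_inv_eq_one] using hbal.walkGain_eq_one (h₁.append h₂.reverse)

end Balanced

section Union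

variable [DecidableEq V] [DecidableEq E] {H₁ H₂ : Subgraph G}

theorem Balanced.exists_freeWalk_inter (hbal : Balanced G H₁)
    (hI : FreelyConnected G (H₁.inter H₂)) {P : List (E × Bool)} {a b : V}
    (hP : FreeWalk G H₁ P a b) (ha : a ∈ H₂.verts) (hb : b ∈ H₂.verts) :
    ∃ Q, FreeWalk G H₂ Q a b ∧ walkGain G Q = walkGain G P := by
  obtain ⟨Q, hQ⟩ := hI a (Finset.mem_inter.2 ⟨hP.start_mem, ha⟩)
    b (Finset.mem_inter.2 ⟨hP.reverse.start_mem, hb⟩) hP.start_not_mem_fixed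
    hP.reverse.start_not_mem_fixed
  exact ⟨Q, hQ.mono (H₁.inter_le_right H₂),
    hbal.walkGain_eq (hQ.mono (H₁.inter_le_left H₂)) hP⟩

/-- The second conjunct carries a detour `P` through `H₁` that left `H₂` at `a₀`; it is
rerouted through `H₁ ∩ H₂` as soon as the walk returns to `H₂`. -/
theorem Balanced.exists_freeWalk_of_union_aux (hbal : Balanced G H₁)
    (hI : FreelyConnected G (H₁.inter H₂)) :
    ∀ {L : List (E × Bool)} {a b : V}, FreeWalk G (H₁.union H₂) L a b → b ∈ H₂.verts →
      (a ∈ H₂.verts → ∃ L', FreeWalk G H₂ L' a b ∧ walkGain G L' = walkGain G L) ∧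
      (∀ a₀ P, a₀ ∈ H₂.verts → FreeWalk G H₁ P a₀ a →
        ∃ L', FreeWalk G H₂ L' a₀ b ∧ walkGain G L' = walkGain G P * walkGain G L)
  | [], a, b, hL, hb => by
    obtain ⟨rfl, -, hf⟩ := freeWalk_nil.1 hL
    refine ⟨fun ha => ⟨[], freeWalk_nil.2 ⟨rfl, ha, hf⟩, rfl⟩, fun a₀ P ha₀ hP => ?_⟩
    simpa using hbal.exists_freeWalk_inter hI hP ha₀ hb
  | s :: L, a, b, hL, hb => by
    obtain ⟨hs, rfl, hf, hL⟩ := freeWalk_cons.1 hL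
    have IH := hbal.exists_freeWalk_of_union_aux hI hL hb
    by_cases hs₂ : s.1 ∈ H₂.edges
    · obtain ⟨L', hL', hg⟩ := IH.1 (stepEnd_mem hs₂)
      have hsL' : FreeWalk G H₂ (s :: L') (stepStart G s) b :=
        freeWalk_cons.2 ⟨hs₂, rfl, hf, hL'⟩
      refine ⟨fun _ => ⟨s :: L', hsL', by simp [hg]⟩, fun a₀ P ha₀ hP => ?_⟩
      obtain ⟨Q, hQ, hgQ⟩ := hbal.exists_freeWalk_inter hI hP ha₀ (stepStart_mem hs₂)
      exact ⟨Q ++ s :: L', hQ.append hsL', by simp [hgQ, hg]⟩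
    · have hs₁ : s.1 ∈ H₁.edges := (Finset.mem_union.1 hs).resolve_right hs₂
      have hstep : FreeWalk G H₁ [s] (stepStart G s) (stepEnd G s) :=
        freeWalk_cons.2 ⟨hs₁, rfl, hf, freeWalk_nil.2
          ⟨rfl, stepEnd_mem hs₁, hL.start_not_mem_fixed⟩⟩
      refine ⟨fun ha => by simpa using IH.2 _ [s] ha hstep, fun a₀ P ha₀ hP => ?_⟩
      simpa [mul_assoc] using IH.2 a₀ (P ++ [s]) ha₀ (hP.append hstep)

theorem Balanced.exists_freeWalk_of_union (hbal : Balanced G H₁)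
    (hI : FreelyConnected G (H₁.inter H₂)) {L : List (E × Bool)} {a b : V}
    (hL : FreeWalk G (H₁.union H₂) L a b) (ha : a ∈ H₂.verts) (hb : b ∈ H₂.verts) :
    ∃ L', FreeWalk G H₂ L' a b ∧ walkGain G L' = walkGain G L :=
  (hbal.exists_freeWalk_of_union_aux hI hL hb).1 ha

end Union

end Group

section CommGroup

variable [CommGroup Γ] [DecidableEq V] [DecidableEq E] {H₁ H₂ : Subgraph G}

theorem Balanced.gainGroup_union (hbal : Balanced G H₁) (hI : FreelyConnected G (H₁.inter H₂)) :
    gainGroup G (H₁.union H₂) = gainGroup G H₂ := by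
  refine le_antisymm (gainGroup_le_iff.2 fun L u hL => ?_) (gainGroup_mono (H₁.right_le_union H₂))
  by_cases hmeet : ∃ s ∈ L, s.1 ∈ H₂.edges
  · obtain ⟨s, hsL, hs₂⟩ := hmeet
    obtain ⟨A, B, rfl⟩ := List.append_of_mem hsL
    obtain ⟨c, hA, hB⟩ := hL.exists_of_append
    have hc : c ∈ H₂.verts := (freeWalk_cons.1 hB).2.1 ▸ stepStart_mem hs₂
    obtain ⟨L', hL', hg⟩ := hbal.exists_freeWalk_of_union hI (hB.append hA) hc hc
    have hrot : walkGain G (s :: B ++ A) = walkGain G (A ++ s :: B) := by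
      simp only [walkGain_append]; exact mul_comm _ _
    rw [← hrot, ← hg]
    exact walkGain_mem_gainGroup hL'
  · push Not at hmeet
    suffices walkGain G L = 1 by simp [this]
    cases L with
    | nil => rfl
    | cons s L =>
      have hs₁ : s.1 ∈ H₁.edges :=
        (Finset.mem_union.1 (freeWalk_cons.1 hL).1).resolve_right (hmeet s List.mem_cons_self)
      refine hbal.walkGain_eq_one (hL.of_edges_subset ?_ fun t ht => ?_)
      · exact (freeWalk_cons.1 hL).2.1 ▸ stepStart_mem hs₁
      · exact (Finset.mem_union.1 (hL.edge_mem t ht)).resolve_right (hmeet t ht)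

end CommGroup

theorem union_with_balanced_general {V E : Type} [DecidableEq V] [DecidableEq E]
    [Fintype V] [Fintype E] (k : ℕ)
    (G : GainedGraph V E (Multiplicative (ZMod k)))
    (hG : IsGainGraphOn G (⊤ : Subgraph G))
    (H₁ H₂ : Subgraph G)
    (hcI : Connected G (H₁.inter H₂))
    (hcut : ∀ v ∈ G.fixed, ¬ IsCutVertex G (H₁.inter H₂) v)
    (hbal : Balanced G H₁) :
    gainGroup G (H₁.union H₂) = gainGroup G H₂ ∧
      (Balanced G H₂ → Balanced G (H₁.union H₂)) := by
  have hfix : G.fixed.card ≤ 1 := by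
    simpa [Subgraph.fixedVerts, show (⊤ : Subgraph G).verts = Finset.univ from rfl] using
      hG.fixed_card
  have hunion := hbal.gainGroup_union (hcI.freelyConnected hfix hcut)
  exact ⟨hunion, fun hbal₂ => hunion.trans hbal₂⟩

/-- If `H₁, H₂` are connected subgraphs of a `Γ`-gain graph such that
`H₁ ∩ H₂` is connected with no fixed cut-vertex, and `H₁` is balanced, then
`⟨H₁ ∪ H₂⟩ = ⟨H₂⟩`; in particular if `H₂` is also balanced then so is `H₁ ∪ H₂`. -/
theorem union_with_balanced {V E : Type} [DecidableEq V] [DecidableEq E]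
    [Fintype V] [Fintype E] (k : ℕ) (hk : 0 < k)
    (G : GainedGraph V E (Multiplicative (ZMod k)))
    (hG : IsGainGraphOn G (⊤ : Subgraph G))
    (H₁ H₂ : Subgraph G)
    (hc₁ : Connected G H₁) (hc₂ : Connected G H₂)
    (hcI : Connected G (H₁.inter H₂))
    (hcut : ∀ v ∈ G.fixed, ¬ IsCutVertex G (H₁.inter H₂) v)
    (hbal : Balanced G H₁) :
    gainGroup G (H₁.union H₂) = gainGroup G H₂ ∧
      (Balanced G H₂ → Balanced G (H₁.union H₂)) :=
  union_with_balanced_general k G hG H₁ H₂ hcI hcut hbal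

end GR
end

section
/- Let 0 ≤ m ≤ 2 and 0 ≤ l ≤ 3, and let (G,ψ) be a Γ-gain graph with a free vertex v of degree 3 which has no loop (the neighbours of v need not be distinct). If (G,ψ) is (2,m,l)-sparse, then there is no (2,m,l)-tight subgraph of G − v that contains all neighbours of v. -/
open scoped Classical

namespace GR

/-- If `(G,ψ)` is `(2,m,l)`-sparse with `0 ≤ m ≤ 2`, `0 ≤ l ≤ 3`,
and `v` is a free vertex of degree `3` with no loop, then no `(2,m,l)`-tight subgraph of
`G − v` contains all neighbours of `v`. -/
theorem no_tight_subgraph_with_all_neighbors {V E : Type} [DecidableEq V] [DecidableEq E]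
    [Fintype V] [Fintype E] (k : ℕ) (hk : 0 < k)
    (m l : ℤ) (hm0 : 0 ≤ m) (hm2 : m ≤ 2) (hl0 : 0 ≤ l) (hl3 : l ≤ 3)
    (G : GainedGraph V E (Multiplicative (ZMod k)))
    (hG : IsGainGraphOn G (⊤ : Subgraph G))
    (v : V) (hvfree : v ∉ G.fixed)
    (hdeg : degree G (⊤ : Subgraph G) v = 3)
    (hloop : ¬ HasLoopAt G (⊤ : Subgraph G) v)
    (hsp : Sparse G m l (⊤ : Subgraph G)) :
    ¬ ∃ H : Subgraph G, H ≤ (⊤ : Subgraph G).deleteVertex v ∧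
        neighbors G (⊤ : Subgraph G) v ⊆ H.verts ∧ Tight G m l H := by
  rintro ⟨H, hHle, hnbr, hHsp, hHcard⟩
  -- the edges of `⊤` incident to `v`
  set F : Finset E := Finset.univ.filter (fun e => G.tail e = v ∨ G.head e = v) with hF
  have hvnotH : v ∉ H.verts := fun hv => (Finset.mem_erase.1 (hHle.1 hv)).1 rfl
  have hHedges : ∀ e ∈ H.edges, G.tail e ≠ v ∧ G.head e ≠ v := by
    intro e he
    have := hHle.2 he
    simp only [Subgraph.deleteVertex, Finset.mem_filter] at this
    exact this.2
  have hnoloop : ∀ e : E, ¬ (G.tail e = v ∧ G.head e = v) := by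
    intro e he
    exact hloop ⟨e, by simp [Top.top], he.1, he.2⟩
  -- the augmented subgraph
  set H' : Subgraph G := {
    verts := insert v H.verts
    edges := H.edges ∪ F
    tail_mem := by
      intro e he
      rcases Finset.mem_union.1 he with h | h
      · exact Finset.mem_insert_of_mem (H.tail_mem e h)
      · rcases (Finset.mem_filter.1 h).2 with ht | hh
        · exact ht ▸ Finset.mem_insert_self _ _
        · refine Finset.mem_insert_of_mem (hnbr ?_)
          exact Finset.mem_union_right _ (Finset.mem_image_of_mem _
            (Finset.mem_filter.2 ⟨by simp [Top.top], hh⟩))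
    head_mem := by
      intro e he
      rcases Finset.mem_union.1 he with h | h
      · exact Finset.mem_insert_of_mem (H.head_mem e h)
      · rcases (Finset.mem_filter.1 h).2 with ht | hh
        · refine Finset.mem_insert_of_mem (hnbr ?_)
          exact Finset.mem_union_left _ (Finset.mem_image_of_mem _
            (Finset.mem_filter.2 ⟨by simp [Top.top], ht⟩))
        · exact hh ▸ Finset.mem_insert_self _ _ } with hH'
  have hFcard : F.card = 3 := by
    have hsplit : F = Finset.univ.filter (fun e => G.tail e = v) ∪
        Finset.univ.filter (fun e => G.head e = v) := by
      rw [hF, Finset.filter_or]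
    have hdisj : Disjoint (Finset.univ.filter (fun e => G.tail e = v))
        (Finset.univ.filter (fun e => G.head e = v)) := by
      rw [Finset.disjoint_left]
      intro e h1 h2
      exact hnoloop e ⟨(Finset.mem_filter.1 h1).2, (Finset.mem_filter.1 h2).2⟩
    have := hdeg
    unfold degree at this
    rw [hsplit, Finset.card_union_of_disjoint hdisj]
    simpa [Top.top] using this
  have hdisjHF : Disjoint H.edges F := by
    rw [Finset.disjoint_left]
    intro e he heF
    rcases (Finset.mem_filter.1 heF).2 with h | h
    · exact (hHedges e he).1 h
    · exact (hHedges e he).2 h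
  have hedgecard : H'.edges.card = H.edges.card + 3 := by
    rw [hH']
    simpa [Finset.card_union_of_disjoint hdisjHF] using congrArg (H.edges.card + ·) hFcard
  have hfree : H'.freeVerts = insert v H.freeVerts := by
    rw [hH']
    simp only [Subgraph.freeVerts]
    rw [Finset.insert_sdiff_of_notMem _ hvfree]
  have hfreecard : H'.freeVerts.card = H.freeVerts.card + 1 := by
    have hv' : v ∉ H.freeVerts := by
      simp only [Subgraph.freeVerts, Finset.mem_sdiff]
      exact fun h => hvnotH h.1
    rw [hfree, Finset.card_insert_of_notMem hv']
  have hfixed : H'.fixedVerts = H.fixedVerts := by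
    rw [hH']
    simp only [Subgraph.fixedVerts]
    rw [Finset.insert_inter_of_notMem hvfree]
  have hne : H'.edges.Nonempty := by
    rw [← Finset.card_pos, hedgecard]; omega
  have hbound := hsp H' ⟨Finset.subset_univ _, Finset.subset_univ _⟩ hne
  rw [hedgecard, hfreecard, hfixed] at hbound
  push_cast at hbound
  omega

end GR
end
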